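/- Let G be a groupoid whose underlying category is connected and nonempty, let C be a category admitting colimits of shape G, and let F : G ⥤ C be a functor that sends every endomorphism of every object of G to an identity morphism. Then for every object x of G, the colimit coprojection (cocone leg) F(x) → colim F is an isomorphism. -/
import Mathlib


open CategoryTheory CategoryTheory.Limits

/-- If `F` is a functor from a nonempty connected groupoid `G` to a category
with colimits of shape `G`, and `F` sends every endomorphism of every object to
an identity, then every colimit coprojection `F(x) → colim F` is an
isomorphism. -/
theorem colimit_coprojection_isIso {G : Type*} [Groupoid G] [Nonempty G]
    {C : Type*} [Category C] [HasColimitsOfShape G C]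
    (hconn : ∀ a b : G, Nonempty (a ⟶ b)) (F : G ⥤ C)
    (hend : ∀ (y : G) (e : y ⟶ y), F.map e = 𝟙 (F.obj y)) (x : G) :
    IsIso (colimit.ι F x) := by
  have g : ∀ a : G, a ⟶ x := fun a => (hconn a x).some
  -- key: F.map of any two parallel maps agree
  have key : ∀ {a : G} (f₁ f₂ : a ⟶ x), F.map f₁ = F.map f₂ := by
    intro a f₁ f₂
    have : f₂ = f₁ ≫ (Groupoid.inv f₁ ≫ f₂) := by simp
    rw [this, F.map_comp, hend, Category.comp_id]
  let c : Cocone F :=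
    { pt := F.obj x
      ι := { app := fun a => F.map (g a)
             naturality := by
               intro a b f
               dsimp
               rw [Category.comp_id, ← F.map_comp]
               exact key _ _ } }
  refine ⟨colimit.desc F c, ?_, ?_⟩
  · rw [colimit.ι_desc]
    exact (key (g x) (𝟙 x)).trans (F.map_id x)
  · apply colimit.hom_ext
    intro a
    rw [colimit.ι_desc_assoc, Category.comp_id]
    exact colimit.w F (g a)
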